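/- arXiv:1605.01003 — 9 statements merged into one kernel-verified Lean document; each statement's English description precedes it below -/
import Mathlib

section
/- Let B be a Boolean algebra, and let S and σ be (n+1)-ary operations on B such that for all p̄ ∈ Bⁿ and r ∈ B, S(p̄, r) is the least fixpoint of the map x ↦ σ(p̄, r ∧ x). Then for any p̄ ∈ Bⁿ and r, γ ∈ B: if γ ∧ S(p̄, r) ≠ ⊥, then γ ∧ S(p̄, r ∧ ¬γ) ≠ ⊥. -/
/-- General context rule for least fixpoints in a Boolean algebra. -/
theorem stmt_1 {B : Type*} [BooleanAlgebra B] {n : ℕ}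
    (S σ : (Fin n → B) → B → B)
    (hfix : ∀ (p : Fin n → B) (r : B), σ p (r ⊓ S p r) = S p r)
    (hleast : ∀ (p : Fin n → B) (r x : B), σ p (r ⊓ x) = x → S p r ≤ x)
    (p : Fin n → B) (r γ : B)
    (h : γ ⊓ S p r ≠ ⊥) :
    γ ⊓ S p (r ⊓ γᶜ) ≠ ⊥ := by
  intro hc
  apply h
  set x := S p (r ⊓ γᶜ) with hx
  have hxd : x ≤ γᶜ := by
    exact (disjoint_iff.2 hc).le_compl_left
  have hkey : r ⊓ x = (r ⊓ γᶜ) ⊓ x := by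
    rw [inf_assoc]
    congr 1
    exact (inf_eq_right.2 hxd).symm
  have hfx : σ p (r ⊓ x) = x := by rw [hkey]; exact hfix p (r ⊓ γᶜ)
  have hle : S p r ≤ x := hleast p r x hfx
  have : S p r ≤ γᶜ := hle.trans hxd
  rw [eq_bot_iff]
  calc γ ⊓ S p r ≤ γ ⊓ γᶜ := inf_le_inf_left _ this
    _ = ⊥ := inf_compl_eq_bot
end

section
/- In any CTL^f-algebra, EU(a ∨ a', b) = EU(a, b) ∨ EU(a', b) for all elements a, a', b. -/
/-- In any CTL^f-algebra, EU(a ∨ a', b) = EU(a, b) ∨ EU(a', b). -/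
theorem stmt_2 {A : Type*} [BooleanAlgebra A] (dia : A → A)
    (hbot : dia ⊥ = ⊥) (hjoin : ∀ a b : A, dia (a ⊔ b) = dia a ⊔ dia b)
    (htop : dia ⊤ = ⊤)
    (EU EG : A → A → A)
    (hEUfix : ∀ a b : A, a ⊔ (b ⊓ dia (EU a b)) ≤ EU a b)
    (hEUmin : ∀ a b c : A, a ⊔ (b ⊓ dia c) ≤ c → EU a b ≤ c)
    (hEGfix : ∀ a b : A, EG a b ≤ a ⊓ dia (EU (b ⊓ EG a b) a))
    (hEGmax : ∀ a b c : A, c ≤ a ⊓ dia (EU (b ⊓ c) a) → c ≤ EG a b)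
    (a a' b : A) :
    EU (a ⊔ a') b = EU a b ⊔ EU a' b := by
  apply le_antisymm
  · apply hEUmin
    rw [hjoin, inf_sup_left]
    refine sup_le (sup_le ?_ ?_) (sup_le ?_ ?_)
    · exact le_sup_of_le_left ((le_sup_left).trans (hEUfix a b))
    · exact le_sup_of_le_right ((le_sup_left).trans (hEUfix a' b))
    · exact le_sup_of_le_left ((le_sup_right).trans (hEUfix a b))
    · exact le_sup_of_le_right ((le_sup_right).trans (hEUfix a' b))
  · refine sup_le (hEUmin _ _ _ ?_) (hEUmin _ _ _ ?_)
    · exact sup_le ((le_sup_of_le_left le_sup_left).trans (hEUfix (a ⊔ a') b))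
        (le_sup_right.trans (hEUfix (a ⊔ a') b))
    · exact sup_le ((le_sup_of_le_left le_sup_right).trans (hEUfix (a ⊔ a') b))
        (le_sup_right.trans (hEUfix (a ⊔ a') b))
end

section
/- In any CTL^f-algebra, if a ∧ c ≤ □c and b ∧ c ≤ □c, then EU(a, b) ∧ c ≤ EU(a ∧ □c, b ∧ □c). -/
/-- In any CTL^f-algebra, if a ∧ c ≤ □c and b ∧ c ≤ □c, then
    EU(a,b) ∧ c ≤ EU(a ∧ □c, b ∧ □c), where □x := ¬◇¬x. -/
theorem stmt_6 {A : Type*} [BooleanAlgebra A] (dia : A → A)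
    (hbot : dia ⊥ = ⊥) (hjoin : ∀ a b : A, dia (a ⊔ b) = dia a ⊔ dia b)
    (htop : dia ⊤ = ⊤)
    (EU : A → A → A)
    (hEUfix : ∀ a b : A, a ⊔ (b ⊓ dia (EU a b)) ≤ EU a b)
    (hEUmin : ∀ a b c : A, a ⊔ (b ⊓ dia c) ≤ c → EU a b ≤ c)
    (a b c : A)
    (ha : a ⊓ c ≤ (dia cᶜ)ᶜ) (hb : b ⊓ c ≤ (dia cᶜ)ᶜ) :
    EU a b ⊓ c ≤ EU (a ⊓ (dia cᶜ)ᶜ) (b ⊓ (dia cᶜ)ᶜ) := by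
  set bc := (dia cᶜ)ᶜ with hbc
  set d := EU (a ⊓ bc) (b ⊓ bc) with hd
  have hle : ∀ x : A, x ⊓ c ≤ d → x ≤ cᶜ ⊔ d := by
    intro x hx
    rw [sup_comm, ← himp_eq, le_himp_iff]
    exact hx
  have hfix := hEUfix (a ⊓ bc) (b ⊓ bc)
  have h1 : a ⊓ c ≤ d := le_trans (le_inf inf_le_left ha) (le_sup_left.trans hfix)
  have hmain : EU a b ≤ cᶜ ⊔ d := by
    apply hEUmin
    apply sup_le
    · exact hle a h1
    · apply hle
      rw [hjoin]
      have : b ⊓ (dia cᶜ ⊔ dia d) ⊓ c ≤ (b ⊓ dia cᶜ ⊓ c) ⊔ (b ⊓ dia d ⊓ c) := by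
        rw [inf_sup_left, inf_sup_right]
      refine this.trans (sup_le ?_ ?_)
      · have : b ⊓ dia cᶜ ⊓ c ≤ bc ⊓ dia cᶜ := by
          refine le_inf ?_ (inf_le_left.trans inf_le_right)
          exact le_trans (le_inf (inf_le_left.trans inf_le_left) inf_le_right) hb
        exact this.trans (by simp [hbc])
      · refine le_trans ?_ (le_sup_right.trans hfix)
        refine le_inf (le_inf ?_ ?_) ?_
        · exact inf_le_left.trans inf_le_left
        · exact le_trans (le_inf (inf_le_left.trans inf_le_left) inf_le_right) hb
        · exact inf_le_left.trans inf_le_right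
  calc EU a b ⊓ c ≤ (cᶜ ⊔ d) ⊓ c := inf_le_inf_right c hmain
    _ ≤ d := by rw [inf_sup_right]; simp
end

section
/- In any CTL^f-algebra, for all elements p, q, r, the element EU_c(p,q,r) := p ∨ (q ∧ ◇EU(p ∧ r, q ∧ r)) is the least pre-fixpoint of the monotone function x ↦ p ∨ (q ∧ ◇(r ∧ x)); that is, p ∨ (q ∧ ◇(r ∧ EU_c(p,q,r))) ≤ EU_c(p,q,r), and for any s with p ∨ (q ∧ ◇(r ∧ s)) ≤ s one has EU_c(p,q,r) ≤ s. -/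
/-- EU_c(p,q,r) := p ∨ (q ∧ ◇EU(p ∧ r, q ∧ r)) is the least pre-fixpoint of
    x ↦ p ∨ (q ∧ ◇(r ∧ x)). -/
theorem stmt_7 {A : Type*} [BooleanAlgebra A] (dia : A → A)
    (hbot : dia ⊥ = ⊥) (hjoin : ∀ a b : A, dia (a ⊔ b) = dia a ⊔ dia b)
    (htop : dia ⊤ = ⊤)
    (EU : A → A → A)
    (hEUfix : ∀ a b : A, a ⊔ (b ⊓ dia (EU a b)) ≤ EU a b)
    (hEUmin : ∀ a b c : A, a ⊔ (b ⊓ dia c) ≤ c → EU a b ≤ c)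
    (p q r : A) :
    (p ⊔ (q ⊓ dia (r ⊓ (p ⊔ (q ⊓ dia (EU (p ⊓ r) (q ⊓ r)))))) ≤
      p ⊔ (q ⊓ dia (EU (p ⊓ r) (q ⊓ r)))) ∧
    (∀ s : A, p ⊔ (q ⊓ dia (r ⊓ s)) ≤ s →
      p ⊔ (q ⊓ dia (EU (p ⊓ r) (q ⊓ r))) ≤ s) := by
  have hmono : ∀ a b : A, a ≤ b → dia a ≤ dia b := fun a b h => by
    have : dia b = dia a ⊔ dia b := by rw [← hjoin, sup_eq_right.mpr h]
    rw [this]; exact le_sup_left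
  constructor
  · have h1 : r ⊓ (p ⊔ (q ⊓ dia (EU (p ⊓ r) (q ⊓ r)))) ≤ EU (p ⊓ r) (q ⊓ r) := by
      refine le_trans ?_ (hEUfix (p ⊓ r) (q ⊓ r))
      rw [inf_sup_left]
      apply sup_le_sup
      · rw [inf_comm]
      · rw [← inf_assoc, inf_comm r q]
    exact sup_le_sup_left (inf_le_inf_left q (hmono _ _ h1)) p
  · intro s hs
    have hp : p ≤ s := le_trans le_sup_left hs
    have hq : q ⊓ dia (r ⊓ s) ≤ s := le_trans le_sup_right hs
    have hE : EU (p ⊓ r) (q ⊓ r) ≤ r ⊓ s := by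
      apply hEUmin
      apply sup_le
      · exact le_inf inf_le_right (le_trans inf_le_left hp)
      · refine le_inf (le_trans inf_le_left inf_le_right) ?_
        exact le_trans (inf_le_inf_right _ inf_le_left) hq
    apply sup_le hp
    exact le_trans (inf_le_inf_left q (hmono _ _ hE)) hq
end

section
/- In any CTL^f-algebra, for all elements p, q, r, one has EU_c(p,q,r) ∧ r = EU(p ∧ r, q ∧ r), where EU_c(p,q,r) := p ∨ (q ∧ ◇EU(p ∧ r, q ∧ r)). -/
/-- In any CTL^f-algebra, EU_c(p,q,r) ∧ r = EU(p ∧ r, q ∧ r),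
    where EU_c(p,q,r) := p ∨ (q ∧ ◇EU(p ∧ r, q ∧ r)). -/
theorem stmt_8 {A : Type*} [BooleanAlgebra A] (dia : A → A)
    (hbot : dia ⊥ = ⊥) (hjoin : ∀ a b : A, dia (a ⊔ b) = dia a ⊔ dia b)
    (htop : dia ⊤ = ⊤)
    (EU : A → A → A)
    (hEUfix : ∀ a b : A, a ⊔ (b ⊓ dia (EU a b)) ≤ EU a b)
    (hEUmin : ∀ a b c : A, a ⊔ (b ⊓ dia c) ≤ c → EU a b ≤ c)
    (p q r : A) :
    (p ⊔ (q ⊓ dia (EU (p ⊓ r) (q ⊓ r)))) ⊓ r = EU (p ⊓ r) (q ⊓ r) := by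
  have hmono : ∀ a b : A, a ≤ b → dia a ≤ dia b := by
    intro a b hab
    have : a ⊔ b = b := sup_eq_right.mpr hab
    calc dia a ≤ dia a ⊔ dia b := le_sup_left
      _ = dia (a ⊔ b) := (hjoin a b).symm
      _ = dia b := by rw [this]
  set E := EU (p ⊓ r) (q ⊓ r) with hE
  have hle : (p ⊔ (q ⊓ dia E)) ⊓ r ≤ E := by
    rw [inf_sup_right]
    refine sup_le ?_ ?_
    · exact le_trans le_sup_left (hEUfix _ _)
    · refine le_trans ?_ (le_trans le_sup_right (hEUfix (p ⊓ r) (q ⊓ r)))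
      calc q ⊓ dia E ⊓ r = q ⊓ r ⊓ dia E := by ac_rfl
        _ ≤ q ⊓ r ⊓ dia E := le_rfl
  have hge : E ≤ (p ⊔ (q ⊓ dia E)) ⊓ r := by
    apply hEUmin
    refine sup_le ?_ ?_
    · exact le_inf (le_trans inf_le_left le_sup_left) inf_le_right
    · have hdc : dia ((p ⊔ (q ⊓ dia E)) ⊓ r) ≤ dia E := hmono _ _ hle
      refine le_inf ?_ (le_trans inf_le_left inf_le_right)
      refine le_trans ?_ le_sup_right
      exact le_inf (le_trans inf_le_left inf_le_left) (le_trans inf_le_right hdc)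
  exact le_antisymm hle hge
end

section
/- In any CTL^f-algebra, for all elements p, q, r, γ: if γ ∧ EU_c(p, q, r) ≠ ⊥, then γ ∧ EU_c(p, q, r ∧ ¬γ) ≠ ⊥, where EU_c(p,q,r) := p ∨ (q ∧ ◇EU(p ∧ r, q ∧ r)). -/
/-- Context rule for EU_c: if γ ∧ EU_c(p,q,r) ≠ ⊥ then γ ∧ EU_c(p,q,r ∧ ¬γ) ≠ ⊥,
    where EU_c(p,q,r) := p ∨ (q ∧ ◇EU(p ∧ r, q ∧ r)). -/
theorem stmt_9 {A : Type*} [BooleanAlgebra A] (dia : A → A)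
    (hbot : dia ⊥ = ⊥) (hjoin : ∀ a b : A, dia (a ⊔ b) = dia a ⊔ dia b)
    (htop : dia ⊤ = ⊤)
    (EU : A → A → A)
    (hEUfix : ∀ a b : A, a ⊔ (b ⊓ dia (EU a b)) ≤ EU a b)
    (hEUmin : ∀ a b c : A, a ⊔ (b ⊓ dia c) ≤ c → EU a b ≤ c)
    (p q r γ : A)
    (h : γ ⊓ (p ⊔ (q ⊓ dia (EU (p ⊓ r) (q ⊓ r)))) ≠ ⊥) :
    γ ⊓ (p ⊔ (q ⊓ dia (EU (p ⊓ (r ⊓ γᶜ)) (q ⊓ (r ⊓ γᶜ))))) ≠ ⊥ := by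
  -- dia is monotone
  have hmono : ∀ a b : A, a ≤ b → dia a ≤ dia b := by
    intro a b hab
    have hj := hjoin a b
    rw [sup_eq_right.mpr hab] at hj
    exact le_sup_left.trans hj.ge
  by_contra hc
  set E' := EU (p ⊓ (r ⊓ γᶜ)) (q ⊓ (r ⊓ γᶜ)) with hE'
  set S' := p ⊔ (q ⊓ dia E') with hS'
  -- from γ ⊓ S' = ⊥ : S' ≤ γᶜ
  have hSle : S' ≤ γᶜ := by
    exact disjoint_iff.mpr (by rwa [inf_comm] at hc) |>.le_compl_right
  -- r ⊓ S' ≤ E'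
  have hrS : r ⊓ S' ≤ E' := by
    have h1 : r ⊓ S' = (p ⊓ (r ⊓ γᶜ)) ⊔ ((q ⊓ (r ⊓ γᶜ)) ⊓ dia E') := by
      have h2 : r ⊓ S' = (r ⊓ γᶜ) ⊓ S' := by
        rw [inf_assoc]
        congr 1
        exact (inf_eq_right.mpr hSle).symm
      rw [h2, hS', inf_sup_left]
      ac_rfl
    rw [h1]
    exact hEUfix _ _
  -- EU (p⊓r) (q⊓r) ≤ r ⊓ S'
  have hmin : EU (p ⊓ r) (q ⊓ r) ≤ r ⊓ S' := by
    apply hEUmin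
    apply sup_le
    · exact le_inf inf_le_right (inf_le_left.trans le_sup_left)
    · refine le_inf (inf_le_left.trans inf_le_right) ?_
      calc (q ⊓ r) ⊓ dia (r ⊓ S') ≤ q ⊓ dia E' :=
            inf_le_inf (inf_le_left) (hmono _ _ hrS)
        _ ≤ S' := le_sup_right
  have hEE : EU (p ⊓ r) (q ⊓ r) ≤ E' := hmin.trans hrS
  have hSS : p ⊔ (q ⊓ dia (EU (p ⊓ r) (q ⊓ r))) ≤ S' :=
    sup_le le_sup_left ((inf_le_inf_left q (hmono _ _ hEE)).trans le_sup_right)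
  exact h (le_antisymm ((inf_le_inf_left γ hSS).trans hc.le) bot_le)
end

section
/- In any CTL^f-algebra, for all elements p, q, r, the element AF_c(p,q,r) := AF(p,q) ∧ (p ∨ □AR(q ∨ r, p)) satisfies AF_c(p,q,r) = p ∨ □((q ∨ r) ∧ AF_c(p,q,r)), where AF(a,b) := ¬EG(¬a,¬b), AR(a,b) := ¬EU(¬a,¬b), and □x := ¬◇¬x. -/
/-- AF_c(p,q,r) := AF(p,q) ∧ (p ∨ □AR(q ∨ r, p)) satisfies
    AF_c(p,q,r) = p ∨ □((q ∨ r) ∧ AF_c(p,q,r)). -/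
theorem stmt_10 {A : Type*} [BooleanAlgebra A] (dia : A → A)
    (hbot : dia ⊥ = ⊥) (hjoin : ∀ a b : A, dia (a ⊔ b) = dia a ⊔ dia b)
    (htop : dia ⊤ = ⊤)
    (EU EG : A → A → A)
    (hEUfix : ∀ a b : A, a ⊔ (b ⊓ dia (EU a b)) ≤ EU a b)
    (hEUmin : ∀ a b c : A, a ⊔ (b ⊓ dia c) ≤ c → EU a b ≤ c)
    (hEGfix : ∀ a b : A, EG a b ≤ a ⊓ dia (EU (b ⊓ EG a b) a))
    (hEGmax : ∀ a b c : A, c ≤ a ⊓ dia (EU (b ⊓ c) a) → c ≤ EG a b)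
    (box : A → A) (hbox : ∀ x : A, box x = (dia xᶜ)ᶜ)
    (AR : A → A → A) (hAR : ∀ a b : A, AR a b = (EU aᶜ bᶜ)ᶜ)
    (AF : A → A → A) (hAF : ∀ a b : A, AF a b = (EG aᶜ bᶜ)ᶜ)
    (p q r : A) :
    AF p q ⊓ (p ⊔ box (AR (q ⊔ r) p)) =
      p ⊔ box ((q ⊔ r) ⊓ (AF p q ⊓ (p ⊔ box (AR (q ⊔ r) p)))) := by
  have dia_mono : ∀ a b : A, a ≤ b → dia a ≤ dia b := by
    intro a b h
    have h2 : a ⊔ b = b := sup_eq_right.mpr h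
    calc dia a ≤ dia a ⊔ dia b := le_sup_left
      _ = dia (a ⊔ b) := (hjoin a b).symm
      _ = dia b := by rw [h2]
  have box_mono : ∀ a b : A, a ≤ b → box a ≤ box b := by
    intro a b h
    rw [hbox, hbox]
    exact compl_le_compl (dia_mono _ _ (compl_le_compl h))
  have box_inf : ∀ a b : A, box (a ⊓ b) = box a ⊓ box b := by
    intro a b
    rw [hbox, hbox, hbox, compl_inf, hjoin, compl_sup]
  have AR_fix_le : ∀ a b : A, AR a b ≤ a ⊓ (b ⊔ box (AR a b)) := by
    intro a b
    have h2 := compl_le_compl (hEUfix aᶜ bᶜ)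
    rw [hAR, hbox, compl_compl]
    simpa [compl_sup, compl_inf] using h2
  have AR_max : ∀ a b c : A, c ≤ a ⊓ (b ⊔ box c) → c ≤ AR a b := by
    intro a b c h
    rw [hAR, le_compl_comm]
    apply hEUmin
    have h2 := compl_le_compl h
    simpa [hbox, compl_sup, compl_inf] using h2
  have AR_mono : ∀ a a' b : A, a ≤ a' → AR a b ≤ AR a' b := by
    intro a a' b h
    apply AR_max
    exact le_trans (AR_fix_le a b) (inf_le_inf_right _ h)
  have AR_fix : ∀ a b : A, AR a b = a ⊓ (b ⊔ box (AR a b)) := by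
    intro a b
    refine le_antisymm (AR_fix_le a b) (AR_max _ _ _ ?_)
    exact inf_le_inf_left _ (sup_le_sup_left (box_mono _ _ (AR_fix_le a b)) _)
  have AR_inf : ∀ a a' b : A, AR (a ⊓ a') b = AR a b ⊓ AR a' b := by
    intro a a' b
    refine le_antisymm (le_inf (AR_mono _ _ _ inf_le_left) (AR_mono _ _ _ inf_le_right)) ?_
    apply AR_max
    have h1 := AR_fix_le a b
    have h2 := AR_fix_le a' b
    have : AR a b ⊓ AR a' b ≤ (a ⊓ (b ⊔ box (AR a b))) ⊓ (a' ⊓ (b ⊔ box (AR a' b))) :=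
      inf_le_inf h1 h2
    calc AR a b ⊓ AR a' b
        ≤ (a ⊓ (b ⊔ box (AR a b))) ⊓ (a' ⊓ (b ⊔ box (AR a' b))) := this
      _ = (a ⊓ a') ⊓ ((b ⊔ box (AR a b)) ⊓ (b ⊔ box (AR a' b))) := by ac_rfl
      _ = (a ⊓ a') ⊓ (b ⊔ (box (AR a b) ⊓ box (AR a' b))) := by rw [sup_inf_left]
      _ = (a ⊓ a') ⊓ (b ⊔ box (AR a b ⊓ AR a' b)) := by rw [box_inf]
  -- AF fixpoint
  have AF_fix_ge : ∀ a b : A, a ⊔ box (AR (b ⊔ AF a b) a) ≤ AF a b := by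
    intro a b
    have h2 := compl_le_compl (hEGfix aᶜ bᶜ)
    rw [hAF, hAR, hbox]
    simpa [hAF, compl_sup, compl_inf, compl_compl] using h2
  have AF_min : ∀ a b c : A, a ⊔ box (AR (b ⊔ c) a) ≤ c → AF a b ≤ c := by
    intro a b c h
    rw [hAF, compl_le_iff_compl_le]
    apply hEGmax
    have h2 := compl_le_compl h
    simpa [hbox, hAR, compl_sup, compl_inf, compl_compl] using h2
  have AF_fix : ∀ a b : A, AF a b = a ⊔ box (AR (b ⊔ AF a b) a) := by
    intro a b
    refine le_antisymm (AF_min _ _ _ ?_) (AF_fix_ge a b)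
    refine sup_le_sup_left (box_mono _ _ (AR_mono _ _ _ (sup_le_sup_left ?_ _))) _
    exact AF_fix_ge a b
  -- Main proof
  set F := AF p q with hF
  set s := q ⊔ r with hs
  set x := (q ⊔ F) ⊓ s with hx
  have step1 : F ⊓ (p ⊔ box (AR s p)) = p ⊔ box (AR x p) := by
    calc F ⊓ (p ⊔ box (AR s p))
        = (p ⊔ box (AR (q ⊔ F) p)) ⊓ (p ⊔ box (AR s p)) := by rw [← AF_fix]
      _ = p ⊔ (box (AR (q ⊔ F) p) ⊓ box (AR s p)) := by rw [sup_inf_left]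
      _ = p ⊔ box (AR (q ⊔ F) p ⊓ AR s p) := by rw [box_inf]
      _ = p ⊔ box (AR x p) := by rw [← AR_inf]
  have hpF : p ≤ F := le_trans le_sup_left (AF_fix_ge p q)
  have hboxF : box (AR x p) ≤ F := by
    have h1 : AR x p ≤ AR (q ⊔ F) p := AR_mono _ _ _ inf_le_left
    have h2 : box (AR x p) ≤ box (AR (q ⊔ F) p) := box_mono _ _ h1
    calc box (AR x p) ≤ box (AR (q ⊔ F) p) := h2
      _ ≤ p ⊔ box (AR (q ⊔ F) p) := le_sup_right
      _ = F := (AF_fix p q).symm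
  have step2 : s ⊓ (p ⊔ box (AR x p)) = AR x p := by
    have hle : s ⊓ (p ⊔ box (AR x p)) ≤ q ⊔ F := by
      have : p ⊔ box (AR x p) ≤ F := sup_le hpF hboxF
      exact le_trans inf_le_right (le_trans this le_sup_right)
    calc s ⊓ (p ⊔ box (AR x p))
        = (q ⊔ F) ⊓ (s ⊓ (p ⊔ box (AR x p))) := (inf_eq_right.mpr hle).symm
      _ = x ⊓ (p ⊔ box (AR x p)) := by rw [hx, inf_assoc]
      _ = AR x p := (AR_fix x p).symm
  calc F ⊓ (p ⊔ box (AR s p))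
      = p ⊔ box (AR x p) := step1
    _ = p ⊔ box (s ⊓ (p ⊔ box (AR x p))) := by rw [step2]
    _ = p ⊔ box (s ⊓ (F ⊓ (p ⊔ box (AR s p)))) := by rw [step1]
end

section
/- In any CTL^f-algebra, for all elements p, q, r, the element AF_c(p,q,r) := AF(p,q) ∧ (p ∨ □AR(q ∨ r, p)) is the least pre-fixpoint of the function x ↦ p ∨ □AR(q ∨ (r ∧ x), p). -/
/-- AF_c(p,q,r) := AF(p,q) ∧ (p ∨ □AR(q ∨ r, p)) is the least pre-fixpoint of
    x ↦ p ∨ □AR(q ∨ (r ∧ x), p). -/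
theorem stmt_11 {A : Type*} [BooleanAlgebra A] (dia : A → A)
    (hbot : dia ⊥ = ⊥) (hjoin : ∀ a b : A, dia (a ⊔ b) = dia a ⊔ dia b)
    (htop : dia ⊤ = ⊤)
    (EU EG : A → A → A)
    (hEUfix : ∀ a b : A, a ⊔ (b ⊓ dia (EU a b)) ≤ EU a b)
    (hEUmin : ∀ a b c : A, a ⊔ (b ⊓ dia c) ≤ c → EU a b ≤ c)
    (hEGfix : ∀ a b : A, EG a b ≤ a ⊓ dia (EU (b ⊓ EG a b) a))
    (hEGmax : ∀ a b c : A, c ≤ a ⊓ dia (EU (b ⊓ c) a) → c ≤ EG a b)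
    (box : A → A) (hbox : ∀ x : A, box x = (dia xᶜ)ᶜ)
    (AR : A → A → A) (hAR : ∀ a b : A, AR a b = (EU aᶜ bᶜ)ᶜ)
    (AF : A → A → A) (hAF : ∀ a b : A, AF a b = (EG aᶜ bᶜ)ᶜ)
    (p q r : A) :
    (p ⊔ box (AR (q ⊔ (r ⊓ (AF p q ⊓ (p ⊔ box (AR (q ⊔ r) p))))) p) ≤
      AF p q ⊓ (p ⊔ box (AR (q ⊔ r) p))) ∧
    (∀ s : A, p ⊔ box (AR (q ⊔ (r ⊓ s)) p) ≤ s →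
      AF p q ⊓ (p ⊔ box (AR (q ⊔ r) p)) ≤ s) := by
  -- diamond is monotone
  have hdmono : ∀ {a b : A}, a ≤ b → dia a ≤ dia b := by
    intro a b hab
    have h := hjoin a b
    rw [sup_eq_right.mpr hab] at h
    rw [h]; exact le_sup_left
  -- box is monotone
  have hboxmono : ∀ {a b : A}, a ≤ b → box a ≤ box b := by
    intro a b hab
    rw [hbox, hbox]
    exact compl_le_compl (hdmono (compl_le_compl hab))
  -- box preserves binary meets
  have hboxinf : ∀ a b : A, box a ⊓ box b = box (a ⊓ b) := by
    intro a b
    rw [hbox, hbox, hbox, compl_inf, hjoin, compl_sup]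
  -- EU monotone in the first argument
  have hEUmono : ∀ {a a' : A} (b : A), a ≤ a' → EU a b ≤ EU a' b := by
    intro a a' b h
    exact hEUmin _ _ _ (le_trans (sup_le_sup_right h _) (hEUfix a' b))
  -- AR monotone in the first argument
  have hARmono : ∀ {a a' : A} (b : A), a ≤ a' → AR a b ≤ AR a' b := by
    intro a a' b h
    rw [hAR, hAR]
    exact compl_le_compl (hEUmono _ (compl_le_compl h))
  -- AR unfolding
  have hARfix : ∀ a b : A, AR a b ≤ a ⊓ (b ⊔ box (AR a b)) := by
    intro a b
    have h := compl_le_compl (hEUfix aᶜ bᶜ)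
    rw [hAR, hbox]
    simpa [compl_sup, compl_inf, compl_compl] using h
  have hARfst : ∀ a b : A, AR a b ≤ a := fun a b => (hARfix a b).trans inf_le_left
  have hARsnd : ∀ a b : A, AR a b ≤ b ⊔ box (AR a b) :=
    fun a b => (hARfix a b).trans inf_le_right
  -- AR coinduction
  have hARco : ∀ a b c : A, c ≤ a ⊓ (b ⊔ box c) → c ≤ AR a b := by
    intro a b c h
    rw [hAR]
    have h' : c ≤ a ⊓ (b ⊔ (dia cᶜ)ᶜ) := by rw [← hbox]; exact h
    have h2 : EU aᶜ bᶜ ≤ cᶜ := by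
      apply hEUmin
      simpa [compl_inf, compl_sup, compl_compl] using compl_le_compl h'
    calc c = cᶜᶜ := (compl_compl c).symm
      _ ≤ (EU aᶜ bᶜ)ᶜ := compl_le_compl h2
  -- AF is a pre-fixpoint of x ↦ p ⊔ □AR(q ⊔ x, p)
  have hAFpre : p ⊔ box (AR (q ⊔ AF p q) p) ≤ AF p q := by
    have h := compl_le_compl (hEGfix pᶜ qᶜ)
    rw [hAF, hbox, hAR]
    have e1 : (q ⊔ (EG pᶜ qᶜ)ᶜ)ᶜ = qᶜ ⊓ EG pᶜ qᶜ := by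
      simp [compl_sup, compl_compl]
    rw [e1, compl_compl]
    simpa [compl_inf, compl_compl] using h
  -- AF minimality
  have hAFmin : ∀ t : A, p ⊔ box (AR (q ⊔ t) p) ≤ t → AF p q ≤ t := by
    intro t h
    rw [hAF]
    have h2 : tᶜ ≤ EG pᶜ qᶜ := by
      apply hEGmax
      have h3 := compl_le_compl h
      simp only [compl_sup, hbox, compl_compl, hAR] at h3
      exact h3
    calc (EG pᶜ qᶜ)ᶜ ≤ tᶜᶜ := compl_le_compl h2
      _ = t := compl_compl t
  set fr := p ⊔ box (AR (q ⊔ r) p) with hfr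
  constructor
  · -- pre-fixpoint
    set X := AF p q ⊓ fr with hX
    apply le_inf
    · -- ≤ AF p q
      have h1 : q ⊔ (r ⊓ X) ≤ q ⊔ AF p q :=
        sup_le_sup_left (le_trans inf_le_right (inf_le_left)) q
      exact le_trans (sup_le_sup_left (hboxmono (hARmono p h1)) p) hAFpre
    · -- ≤ fr
      have h1 : q ⊔ (r ⊓ X) ≤ q ⊔ r := sup_le_sup_left inf_le_left q
      exact sup_le_sup_left (hboxmono (hARmono p h1)) p
  · -- minimality
    intro s hs
    have hps : p ≤ s := le_trans le_sup_left hs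
    set t := frᶜ ⊔ s with ht
    set c := AR (q ⊔ t) p ⊓ AR (q ⊔ r) p with hc
    -- c ≤ fr
    have hcfr : c ≤ fr := by
      calc c ≤ AR (q ⊔ r) p := inf_le_right
        _ ≤ p ⊔ box (AR (q ⊔ r) p) := hARsnd _ _
    -- c ≤ q ⊔ (r ⊓ s)
    have hc1 : c ≤ q ⊔ (r ⊓ s) := by
      have h1 : c ≤ (q ⊔ t) ⊓ (q ⊔ r) :=
        inf_le_inf (hARfst _ _) (hARfst _ _)
      have h2 : c ≤ (q ⊔ (t ⊓ r)) ⊓ fr := by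
        rw [sup_inf_left]
        exact le_inf h1 hcfr
      refine h2.trans ?_
      rw [inf_sup_right]
      apply sup_le (inf_le_left.trans le_sup_left)
      have : t ⊓ r ⊓ fr ≤ r ⊓ s := by
        rw [ht, inf_right_comm, inf_sup_right, compl_inf_eq_bot, bot_sup_eq]
        calc s ⊓ fr ⊓ r ≤ s ⊓ r := inf_le_inf_right r inf_le_left
          _ = r ⊓ s := inf_comm s r
      exact this.trans le_sup_right
    -- c ≤ p ⊔ box c
    have hc2 : c ≤ p ⊔ box c := by
      calc c ≤ (p ⊔ box (AR (q ⊔ t) p)) ⊓ (p ⊔ box (AR (q ⊔ r) p)) :=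
            inf_le_inf (hARsnd _ _) (hARsnd _ _)
        _ = p ⊔ (box (AR (q ⊔ t) p) ⊓ box (AR (q ⊔ r) p)) := (sup_inf_left _ _ _).symm
        _ = p ⊔ box c := by rw [hboxinf]
    -- coinduction: c ≤ AR (q ⊔ (r ⊓ s)) p
    have hcAR : c ≤ AR (q ⊔ (r ⊓ s)) p := hARco _ _ _ (le_inf hc1 hc2)
    have hboxc : box c ≤ s := le_trans (hboxmono hcAR) (le_trans le_sup_right hs)
    -- t is a pre-fixpoint
    have hft : p ⊔ box (AR (q ⊔ t) p) ≤ t := by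
      have key : (p ⊔ box (AR (q ⊔ t) p)) ⊓ fr ≤ s := by
        calc (p ⊔ box (AR (q ⊔ t) p)) ⊓ (p ⊔ box (AR (q ⊔ r) p))
            = p ⊔ (box (AR (q ⊔ t) p) ⊓ box (AR (q ⊔ r) p)) := (sup_inf_left _ _ _).symm
          _ = p ⊔ box c := by rw [hboxinf]
          _ ≤ s := sup_le hps hboxc
      rw [ht]
      have := le_himp_iff.mpr key
      rw [himp_eq] at this
      exact this.trans (sup_le le_sup_right le_sup_left)
    have hAFt : AF p q ≤ t := hAFmin t hft
    calc AF p q ⊓ fr ≤ t ⊓ fr := inf_le_inf_right fr hAFt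
      _ = (frᶜ ⊓ fr) ⊔ (s ⊓ fr) := by rw [ht, inf_sup_right]
      _ ≤ s := by rw [compl_inf_eq_bot, bot_sup_eq]; exact inf_le_left
end

section
/- Let (S,R) be a serial transition system and 𝒫(S) its power set algebra with ◇a := R⁻¹[a] and EU the least fixpoint operation as above. Define EG(a₁,a₂) as the greatest subset x of S satisfying x ⊆ a₁ ∩ ◇EU(a₂ ∩ x, a₁). Then for any s ∈ S: s ∈ EG(a₁,a₂) if and only if there exists an infinite R-path s = s₀, s₁, s₂, … such that sₜ ∈ a₁ for all t ≥ 0 and sₜ ∈ a₂ for infinitely many t. -/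
/-!
By the path description of `EU`, from every point of the greatest post-fixpoint `X = EG(a₁, a₂)`
an `a₁`-guarded path of positive length leads into `a₂ ∩ X`. Gluing such paths
gives the fair infinite path; to make sure every segment is actually completed, the gluing
carries a counter of the steps still missing in the current segment. Conversely, the set of
points of a fair `a₁`-path is itself a post-fixpoint, hence contained in `X`.
-/

open Set

section Paths

variable {α : Type*}

theorem exists_seq_of_forall_exists {I : Set α} {T : α → α → Prop}
    (h : ∀ p ∈ I, ∃ q ∈ I, T p q) {p : α} (hp : p ∈ I) :
    ∃ g : ℕ → α, g 0 = p ∧ ∀ t, g t ∈ I ∧ T (g t) (g (t + 1)) := by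
  choose! next hnextI hnextT using h
  have hI : ∀ t, next^[t] p ∈ I := by
    intro t
    induction t with
    | zero => exact hp
    | succ t ih => rw [Function.iterate_succ_apply']; exact hnextI _ ih
  refine ⟨fun t => next^[t] p, rfl, fun t => ⟨hI t, ?_⟩⟩
  simpa only [Function.iterate_succ_apply'] using hnextT _ (hI t)

theorem exists_ge_eq_zero_of_forall_eq_zero_or_succ {g : ℕ → ℕ}
    (hg : ∀ t, g t = 0 ∨ g (t + 1) + 1 = g t) (N : ℕ) : ∃ t ≥ N, g t = 0 := by
  suffices ∀ n N, g N = n → ∃ t ≥ N, g t = 0 from this _ N rfl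
  intro n
  induction n with
  | zero => exact fun N hN => ⟨N, le_rfl, hN⟩
  | succ n ih =>
    intro N hN
    obtain ⟨t, htN, ht⟩ := ih (N + 1) (by have := hg N; omega)
    exact ⟨t, by omega, ht⟩

def ReachesIn (r : α → α → Prop) (A : Set α) : ℕ → α → Prop
  | 0, c => c ∈ A
  | k + 1, c => ∃ c', r c c' ∧ ReachesIn r A k c'

variable {r : α → α → Prop}

theorem ReachesIn.mono {A B : Set α} (hAB : A ⊆ B) :
    ∀ {k : ℕ} {c : α}, ReachesIn r A k c → ReachesIn r B k c
  | 0, _, hc => hAB hc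
  | _ + 1, _, ⟨c', hr, hc'⟩ => ⟨c', hr, hc'.mono hAB⟩

theorem reachesIn_of_forall_rel {A : Set α} {f : ℕ → α} (hf : ∀ t, r (f t) (f (t + 1)))
    (j k : ℕ) (hA : f (j + k) ∈ A) : ReachesIn r A k (f j) := by
  induction k generalizing j with
  | zero => exact hA
  | succ k ih => exact ⟨f (j + 1), hf j, ih (j + 1) (by rwa [Nat.add_right_comm, Nat.add_assoc])⟩

theorem exists_path_frequently_mem {P Q : Set α}
    (h : ∀ y ∈ P, ∃ k, ReachesIn r (Q ∩ P) (k + 1) y) {y : α} (hy : y ∈ P) :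
    ∃ f : ℕ → α, f 0 = y ∧ (∀ t, r (f t) (f (t + 1))) ∧ ∀ N, ∃ t ≥ N, f t ∈ Q := by
  -- a state is a point together with the number of steps left before reaching `Q ∩ P`
  have step : ∀ p ∈ {p : α × ℕ | ReachesIn r (Q ∩ P) p.2 p.1},
      ∃ q ∈ {p : α × ℕ | ReachesIn r (Q ∩ P) p.2 p.1},
        r p.1 q.1 ∧ (p.2 = 0 ∨ q.2 + 1 = p.2) := by
    rintro ⟨c, _ | k⟩ hp
    · obtain ⟨k, c', hr, hc'⟩ := h c hp.2
      exact ⟨(c', k), hc', hr, .inl rfl⟩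
    · obtain ⟨c', hr, hc'⟩ := hp
      exact ⟨(c', k), hc', hr, .inr rfl⟩
  obtain ⟨k, hk⟩ := h y hy
  obtain ⟨g, hg0, hg⟩ := exists_seq_of_forall_exists step (p := (y, k + 1)) hk
  refine ⟨fun t => (g t).1, by simp only [hg0], fun t => (hg t).2.1, fun N => ?_⟩
  obtain ⟨t, htN, ht⟩ := exists_ge_eq_zero_of_forall_eq_zero_or_succ (fun t => (hg t).2.2) N
  have hreach : ReachesIn r (Q ∩ P) (g t).2 (g t).1 := (hg t).1
  rw [ht] at hreach
  exact ⟨t, htN, hreach.1⟩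

end Paths

section TransitionSystem

variable {S : Type*} (R : S → S → Prop)

def diamond (a : Set S) : Set S :=
  {s | ∃ t ∈ a, R s t}

def existsUntil (a b : Set S) : Set S :=
  ⋂₀ {x | a ∪ (b ∩ diamond R x) ⊆ x}

def existsGlobally (a₁ a₂ : Set S) : Set S :=
  ⋃₀ {x | x ⊆ a₁ ∩ diamond R (existsUntil R (a₂ ∩ x) a₁)}

variable {R}

theorem mem_existsUntil_iff {a b : Set S} {s : S} :
    s ∈ existsUntil R a b ↔ ∃ k, ReachesIn (fun u v => u ∈ b ∧ R u v) a k s := by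
  constructor
  · intro hs
    refine mem_sInter.mp hs {t | ∃ k, ReachesIn (fun u v => u ∈ b ∧ R u v) a k t} ?_
    rintro t (ht | ⟨htb, t', ⟨k, hk⟩, hR⟩)
    · exact ⟨0, ht⟩
    · exact ⟨k + 1, t', ⟨htb, hR⟩, hk⟩
  · rintro ⟨k, hk⟩
    refine mem_sInter.mpr fun x hx => ?_
    induction k generalizing s with
    | zero => exact hx (.inl hk)
    | succ k ih =>
      obtain ⟨t, ⟨hsb, hR⟩, ht⟩ := hk
      exact hx (.inr ⟨hsb, t, ih ht, hR⟩)

theorem mem_inter_diamond_existsUntil_iff {a b : Set S} {s : S} :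
    s ∈ b ∩ diamond R (existsUntil R a b) ↔
      ∃ k, ReachesIn (fun u v => u ∈ b ∧ R u v) a (k + 1) s := by
  simp only [mem_inter_iff, diamond, mem_existsUntil_iff, ReachesIn]
  constructor
  · rintro ⟨hsb, t, ⟨k, hk⟩, hR⟩
    exact ⟨k, t, ⟨hsb, hR⟩, hk⟩
  · rintro ⟨k, t, ⟨hsb, hR⟩, hk⟩
    exact ⟨hsb, t, ⟨k, hk⟩, hR⟩

theorem mem_existsGlobally_iff {a₁ a₂ : Set S} {s : S} :
    s ∈ existsGlobally R a₁ a₂ ↔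
      ∃ f : ℕ → S, f 0 = s ∧ (∀ t, R (f t) (f (t + 1))) ∧
        (∀ t, f t ∈ a₁) ∧ (∀ N, ∃ t ≥ N, f t ∈ a₂) := by
  constructor
  · intro hs
    have hreturn : ∀ y ∈ existsGlobally R a₁ a₂, ∃ k,
        ReachesIn (fun u v => u ∈ a₁ ∧ R u v) (a₂ ∩ existsGlobally R a₁ a₂) (k + 1) y := by
      rintro y ⟨x, hx, hyx⟩
      obtain ⟨k, hk⟩ := mem_inter_diamond_existsUntil_iff.mp (hx hyx)
      exact ⟨k, hk.mono (inter_subset_inter_right a₂ (subset_sUnion_of_mem hx))⟩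
    obtain ⟨f, hf0, hf, hfair⟩ := exists_path_frequently_mem hreturn hs
    exact ⟨f, hf0, fun t => (hf t).2, fun t => (hf t).1, hfair⟩
  · rintro ⟨f, rfl, hR, ha₁, hfair⟩
    refine ⟨range f, ?_, mem_range_self 0⟩
    rintro _ ⟨j, rfl⟩
    obtain ⟨t, hjt, ht⟩ := hfair (j + 1)
    refine mem_inter_diamond_existsUntil_iff.mpr ⟨t - (j + 1), ?_⟩
    refine reachesIn_of_forall_rel (fun i => ⟨ha₁ i, hR i⟩) j _ ?_
    rw [show j + (t - (j + 1) + 1) = t by omega]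
    exact ⟨ht, mem_range_self t⟩

end TransitionSystem

theorem stmt_15_general {S : Type*} (R : S → S → Prop)
    (dia : Set S → Set S) (hdia : ∀ a : Set S, dia a = {s | ∃ t ∈ a, R s t})
    (EU : Set S → Set S → Set S)
    (hEU : ∀ a₁ a₂ : Set S, EU a₁ a₂ = ⋂₀ {x : Set S | a₁ ∪ (a₂ ∩ dia x) ⊆ x})
    (EG : Set S → Set S → Set S)
    (hEG : ∀ a₁ a₂ : Set S,
      EG a₁ a₂ = ⋃₀ {x : Set S | x ⊆ a₁ ∩ dia (EU (a₂ ∩ x) a₁)})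
    (a₁ a₂ : Set S) (s : S) :
    s ∈ EG a₁ a₂ ↔
      ∃ f : ℕ → S, f 0 = s ∧ (∀ t, R (f t) (f (t + 1))) ∧
        (∀ t, f t ∈ a₁) ∧ (∀ N, ∃ t ≥ N, f t ∈ a₂) := by
  obtain rfl : dia = diamond R := funext hdia
  obtain rfl : EU = existsUntil R := funext₂ hEU
  obtain rfl : EG = existsGlobally R := funext₂ hEG
  exact mem_existsGlobally_iff

/-- Characterization of EG in the complex algebra of a serial transition system
    by fair infinite R-paths. -/
theorem stmt_15 {S : Type*} (R : S → S → Prop)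
    (hser : ∀ s : S, ∃ s', R s s')
    (dia : Set S → Set S) (hdia : ∀ a : Set S, dia a = {s | ∃ t ∈ a, R s t})
    (EU : Set S → Set S → Set S)
    (hEU : ∀ a₁ a₂ : Set S, EU a₁ a₂ = ⋂₀ {x : Set S | a₁ ∪ (a₂ ∩ dia x) ⊆ x})
    (EG : Set S → Set S → Set S)
    (hEG : ∀ a₁ a₂ : Set S,
      EG a₁ a₂ = ⋃₀ {x : Set S | x ⊆ a₁ ∩ dia (EU (a₂ ∩ x) a₁)})
    (a₁ a₂ : Set S) (s : S) :
    s ∈ EG a₁ a₂ ↔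
      ∃ f : ℕ → S, f 0 = s ∧ (∀ t, R (f t) (f (t + 1))) ∧
        (∀ t, f t ∈ a₁) ∧ (∀ N, ∃ t ≥ N, f t ∈ a₂) :=
  stmt_15_general R dia hdia EU hEU EG hEG a₁ a₂ s
end
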